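/- Under assumption A1, for any x ∈ F_p⁰, μ > 0 and τ ∈ (0, 1), the proximity measure after reducing the barrier parameter satisfies δ(x, (1−τ)μ) ≤ (δ(x, μ) + τ√n) / (1 − τ). -/

import Mathlib

open Matrix

/-
Rescaling the barrier parameter by `1 - τ` turns the vector `(1/μ) X c - e` into
`(1 - τ)⁻¹ ((1/μ) X c - e + τ e)`. Since `A X` has full row rank, `P_{AX}` is an orthogonal
projection, hence a contraction; the triangle inequality and `‖P_{AX} e‖ ≤ ‖e‖ = √n` give the bound.
-/

noncomputable def enorm {ι : Type*} [Fintype ι] (v : ι → ℝ) : ℝ :=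
  Real.sqrt (∑ i, (v i) ^ 2)

noncomputable def opNorm {ι κ : Type*} [Fintype ι] [Fintype κ]
    (M : Matrix ι κ ℝ) : ℝ :=
  sSup {r : ℝ | ∃ v : κ → ℝ, _root_.enorm v ≤ 1 ∧ r = _root_.enorm (M *ᵥ v)}

noncomputable def lambdaMin {ι : Type*} [Fintype ι] (M : Matrix ι ι ℝ) : ℝ :=
  sInf {r : ℝ | ∃ v : ι → ℝ, _root_.enorm v = 1 ∧ r = v ⬝ᵥ (M *ᵥ v)}

noncomputable def lambdaMax {ι : Type*} [Fintype ι] (M : Matrix ι ι ℝ) : ℝ :=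
  sSup {r : ℝ | ∃ v : ι → ℝ, _root_.enorm v = 1 ∧ r = v ⬝ᵥ (M *ᵥ v)}

noncomputable def condNum {ι : Type*} [Fintype ι] (M : Matrix ι ι ℝ) : ℝ :=
  lambdaMax M / lambdaMin M

noncomputable def gradProj {m n : ℕ} (B : Matrix (Fin m) (Fin n) ℝ) :
    Matrix (Fin n) (Fin n) ℝ :=
  1 - Bᵀ * (B * Bᵀ)⁻¹ * B

/-- The proximity measure `δ(x, μ) = ‖P_{AX}((1/μ) X c - e)‖`. -/
noncomputable def prox {m n : ℕ} (A : Matrix (Fin m) (Fin n) ℝ)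
    (c x : Fin n → ℝ) (μ : ℝ) : ℝ :=
  _root_.enorm (gradProj (A * Matrix.diagonal x) *ᵥ (μ⁻¹ • (Matrix.diagonal x *ᵥ c) - 1))

/-- The proximity measure as `min_{(y,s) ∈ F_d} ‖(1/μ) X s - e‖`. -/
noncomputable def proxMin {m n : ℕ} (A : Matrix (Fin m) (Fin n) ℝ)
    (c x : Fin n → ℝ) (μ : ℝ) : ℝ :=
  sInf {r : ℝ | ∃ (y : Fin m → ℝ) (s : Fin n → ℝ),
    Aᵀ *ᵥ y + s = c ∧ (∀ i, 0 ≤ s i) ∧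
    r = _root_.enorm (μ⁻¹ • (Matrix.diagonal x *ᵥ s) - 1)}

/-- The primal normal matrix `A X² Aᵀ` is positive semidefinite. -/
theorem normalPSD {m n : ℕ} (A : Matrix (Fin m) (Fin n) ℝ) (x : Fin n → ℝ) :
    (A * Matrix.diagonal x ^ 2 * Aᵀ).PosSemidef := by
  have h : A * Matrix.diagonal x ^ 2 * Aᵀ
      = (A * Matrix.diagonal x) * (A * Matrix.diagonal x)ᴴ := by
    rw [Matrix.conjTranspose_mul, Matrix.conjTranspose_eq_transpose_of_trivial,
      Matrix.conjTranspose_eq_transpose_of_trivial, Matrix.diagonal_transpose, pow_two,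
      Matrix.mul_assoc, Matrix.mul_assoc, Matrix.mul_assoc]
  rw [h]
  exact Matrix.posSemidef_self_mul_conjTranspose _

section EuclideanNorm

variable {ι : Type*} [Fintype ι]

lemma enorm_eq_norm_toLp (v : ι → ℝ) :
    _root_.enorm v = ‖(WithLp.toLp 2 v : EuclideanSpace ℝ ι)‖ := by
  simp [_root_.enorm, EuclideanSpace.norm_eq]

lemma enorm_sq_eq_dotProduct (v : ι → ℝ) : _root_.enorm v ^ 2 = v ⬝ᵥ v := by
  rw [enorm_eq_norm_toLp, ← real_inner_self_eq_norm_sq, EuclideanSpace.inner_toLp_toLp]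
  simp

lemma dotProduct_le_enorm_mul_enorm (u v : ι → ℝ) :
    u ⬝ᵥ v ≤ _root_.enorm u * _root_.enorm v := by
  simpa [enorm_eq_norm_toLp, EuclideanSpace.inner_toLp_toLp, dotProduct_comm]
    using real_inner_le_norm (WithLp.toLp 2 u : EuclideanSpace ℝ ι) (WithLp.toLp 2 v)

lemma enorm_mulVec_le_of_transpose_eq_of_mul_self_eq {P : Matrix ι ι ℝ} (hsymm : Pᵀ = P)
    (hidem : P * P = P) (u : ι → ℝ) : _root_.enorm (P *ᵥ u) ≤ _root_.enorm u := by
  have hsq : _root_.enorm (P *ᵥ u) ^ 2 = u ⬝ᵥ (P *ᵥ u) := by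
    conv_rhs => rw [← hidem, ← mulVec_mulVec, dotProduct_mulVec, ← mulVec_transpose, hsymm]
    exact enorm_sq_eq_dotProduct _
  have hcs := dotProduct_le_enorm_mul_enorm u (P *ᵥ u)
  have hu : 0 ≤ _root_.enorm u := Real.sqrt_nonneg _
  nlinarith

end EuclideanNorm

lemma Matrix.isUnit_of_rank_eq_card {K ι : Type*} [Field K] [Fintype ι] [DecidableEq ι]
    {M : Matrix ι ι K} (h : M.rank = Fintype.card ι) : IsUnit M := by
  rw [← mulVec_surjective_iff_isUnit]
  exact LinearMap.range_eq_top.mp (Submodule.eq_top_of_finrank_eq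
    (h.trans (Module.finrank_fintype_fun_eq_card K).symm))

lemma Matrix.isUnit_det_mul_transpose_of_rank_eq {K ι κ : Type*} [Field K] [LinearOrder K]
    [IsStrictOrderedRing K] [Fintype ι] [DecidableEq ι] [Fintype κ] {B : Matrix ι κ K}
    (h : B.rank = Fintype.card ι) : IsUnit (B * Bᵀ).det :=
  (isUnit_iff_isUnit_det _).mp (isUnit_of_rank_eq_card (by rwa [rank_self_mul_transpose]))

lemma Matrix.rank_mul_diagonal_of_ne_zero {K ι κ : Type*} [Field K] [Fintype κ] [DecidableEq κ]
    (A : Matrix ι κ K) {d : κ → K} (hd : ∀ i, d i ≠ 0) : (A * diagonal d).rank = A.rank :=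
  rank_mul_eq_left_of_isUnit_det _ _ (by simp [det_diagonal, Finset.prod_ne_zero_iff, hd])

section gradProj

variable {m n : ℕ} (B : Matrix (Fin m) (Fin n) ℝ)

lemma gradProj_transpose : (gradProj B)ᵀ = gradProj B := by
  rw [gradProj, transpose_sub, transpose_one, transpose_mul, transpose_mul, transpose_transpose,
    transpose_nonsing_inv, transpose_mul, transpose_transpose, Matrix.mul_assoc]

lemma gradProj_mul_self (h : IsUnit (B * Bᵀ).det) : gradProj B * gradProj B = gradProj B := by
  have hQ : (Bᵀ * (B * Bᵀ)⁻¹ * B) * (Bᵀ * (B * Bᵀ)⁻¹ * B) = Bᵀ * (B * Bᵀ)⁻¹ * B := by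
    calc (Bᵀ * (B * Bᵀ)⁻¹ * B) * (Bᵀ * (B * Bᵀ)⁻¹ * B)
        = Bᵀ * (B * Bᵀ)⁻¹ * ((B * Bᵀ) * ((B * Bᵀ)⁻¹ * B)) := by simp only [Matrix.mul_assoc]
      _ = Bᵀ * (B * Bᵀ)⁻¹ * B := by rw [mul_nonsing_inv_cancel_left _ _ h, Matrix.mul_assoc]
  simp only [gradProj, Matrix.sub_mul, Matrix.mul_sub, Matrix.one_mul, Matrix.mul_one, hQ]
  abel

lemma enorm_gradProj_mulVec_le (h : IsUnit (B * Bᵀ).det) (u : Fin n → ℝ) :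
    _root_.enorm (gradProj B *ᵥ u) ≤ _root_.enorm u :=
  enorm_mulVec_le_of_transpose_eq_of_mul_self_eq (gradProj_transpose B) (gradProj_mul_self B h) u

end gradProj

theorem stmt_10_general {m n : ℕ} (A : Matrix (Fin m) (Fin n) ℝ) (c : Fin n → ℝ)
    -- Assumption A1: nonempty primal and dual interiors, full row rank
    (hrank : A.rank = m)
    (x : Fin n → ℝ) (hxpos : ∀ i, 0 < x i)
    (μ : ℝ)
    (τ : ℝ) (hτ0 : 0 < τ) (hτ1 : τ < 1) :
    prox A c x ((1 - τ) * μ) ≤ (prox A c x μ + τ * Real.sqrt n) / (1 - τ) := by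
  have hτ1' : 0 < 1 - τ := sub_pos.mpr hτ1
  set P := gradProj (A * diagonal x)
  set v := μ⁻¹ • (diagonal x *ᵥ c) - 1
  have hP : IsUnit ((A * diagonal x) * (A * diagonal x)ᵀ).det :=
    isUnit_det_mul_transpose_of_rank_eq (by
      rw [rank_mul_diagonal_of_ne_zero A fun i => (hxpos i).ne', hrank, Fintype.card_fin])
  have hshift : ((1 - τ) * μ)⁻¹ • (diagonal x *ᵥ c) - 1 = (1 - τ)⁻¹ • (v + τ • 1) := by
    ext i
    simp only [v, Pi.sub_apply, Pi.smul_apply, Pi.add_apply, Pi.one_apply, smul_eq_mul, mul_inv]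
    field_simp [hτ1'.ne']
    ring
  have hone : _root_.enorm (P *ᵥ 1) ≤ √n := by
    simpa [_root_.enorm] using enorm_gradProj_mulVec_le _ hP 1
  calc prox A c x ((1 - τ) * μ)
      = (1 - τ)⁻¹ * ‖WithLp.toLp 2 (P *ᵥ v) + τ • WithLp.toLp 2 (P *ᵥ 1)‖ := by
        rw [prox, hshift, enorm_eq_norm_toLp, mulVec_smul, mulVec_add, mulVec_smul,
          WithLp.toLp_smul, norm_smul, Real.norm_of_nonneg (inv_pos.mpr hτ1').le,
          WithLp.toLp_add, WithLp.toLp_smul]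
    _ ≤ (1 - τ)⁻¹ * (_root_.enorm (P *ᵥ v) + τ * _root_.enorm (P *ᵥ 1)) := by
        gcongr
        refine (norm_add_le _ _).trans_eq ?_
        rw [norm_smul, Real.norm_of_nonneg hτ0.le, ← enorm_eq_norm_toLp, ← enorm_eq_norm_toLp]
    _ ≤ (1 - τ)⁻¹ * (prox A c x μ + τ * √n) := by gcongr; rfl
    _ = (prox A c x μ + τ * Real.sqrt n) / (1 - τ) := by rw [div_eq_inv_mul]

/-- path-following bound on the proximity measure after
reducing the barrier parameter. -/
theorem stmt_10 {m n : ℕ} (A : Matrix (Fin m) (Fin n) ℝ) (b : Fin m → ℝ) (c : Fin n → ℝ)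
    -- Assumption A1: nonempty primal and dual interiors, full row rank
    (hrank : A.rank = m)
    (hFp0 : ∃ x0 : Fin n → ℝ, A *ᵥ x0 = b ∧ ∀ i, 0 < x0 i)
    (hFd0 : ∃ (y0 : Fin m → ℝ) (s0 : Fin n → ℝ), Aᵀ *ᵥ y0 + s0 = c ∧ ∀ i, 0 < s0 i)
    (x : Fin n → ℝ) (hxfeas : A *ᵥ x = b) (hxpos : ∀ i, 0 < x i)
    (μ : ℝ) (hμ : 0 < μ)
    (τ : ℝ) (hτ0 : 0 < τ) (hτ1 : τ < 1) :
    prox A c x ((1 - τ) * μ) ≤ (prox A c x μ + τ * Real.sqrt n) / (1 - τ) :=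
  stmt_10_general A c hrank x hxpos μ τ hτ0 hτ1
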